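/- Let (X₀,X₁) and (Y₀,Y₁) be couples of quasi-Banach spaces continuously embedded in Hausdorff topological vector spaces, Θ ∈ (0,1), and let T be linear and bounded from A₀ to B₀ and from A₁ to B₁. Then T maps the Gustavsson–Peetre space ⟨A₀, A₁, Θ⟩ continuously into ⟨B₀, B₁, Θ⟩ with operator quasi-norm at most max{‖T‖_{A₀→B₀}, ‖T‖_{A₁→B₁}}. -/

import Mathlib

open Filter
open scoped ENNReal Topology

/-! Applying `T` termwise to an admissible representation `a = Σ aᵢ` gives one of `T a`:
linearity moves `T` through every weighted partial sum and through the tails `a - Σ_{|i|≤k} aᵢ`,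
so each defining inequality, and the sum-space size of the tails, grows by at most
`K = max K₀ K₁`. Taking the infimum over admissible constants gives the norm bound. The case
`K = 0` is separate because `0 * ⊤ = 0` in `ℝ≥0∞`: then `T` kills both quasi-norms, so `T a` is
admissible with constant `0` through the zero representation, whether or not `a` is in
`⟨A₀, A₁, Θ⟩`. -/

section GustavssonPeetre

variable {E : Type*} [AddCommGroup E] [Module ℂ E]

/-- The quasi-norm of the sum space `X₀ + X₁`:
`‖x‖ = inf { ‖x₀‖_{X₀} + ‖x₁‖_{X₁} : x = x₀ + x₁ }`. -/
noncomputable def sumQuasiNorm (N₀ N₁ : E → ℝ≥0∞) (x : E) : ℝ≥0∞ :=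
  ⨅ y : E, N₀ y + N₁ (x - y)

/-- The weighted finite partial sums `Σ_{i ∈ F} ε_i 2^{i(j-Θ)} a_i` occurring in
the Gustavsson–Peetre `±`-method. -/
noncomputable def gpSum (Θ : ℝ) (j : ℕ) (ε : ℤ → ℂ) (s : ℤ → E)
    (F : Finset ℤ) : E :=
  ∑ i ∈ F, (ε i * (((2 : ℝ) ^ ((i : ℝ) * ((j : ℝ) - Θ)) : ℝ) : ℂ)) • s i

/-- `a` belongs to the Gustavsson–Peetre space `⟨X₀, X₁, Θ⟩` with constant `C`:
there is a representation `a = Σ_{i ∈ ℤ} a_i`, `a_i ∈ X₀ ∩ X₁`, converging in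
`X₀ + X₁`, such that for every finite `F ⊂ ℤ` and bounded `(ε_i) ⊂ ℂ`,
`‖Σ_{i∈F} ε_i 2^{i(j-Θ)} a_i‖_{X_j} ≤ C sup_i |ε_i|` for `j = 0, 1`. -/
def MemGP (N₀ N₁ : E → ℝ≥0∞) (Θ : ℝ) (C : ℝ≥0∞) (a : E) : Prop :=
  ∃ s : ℤ → E,
    (∀ i, N₀ (s i) < ⊤ ∧ N₁ (s i) < ⊤) ∧
    Tendsto (fun k : ℕ =>
        sumQuasiNorm N₀ N₁ (a - ∑ i ∈ Finset.Icc (-(k : ℤ)) (k : ℤ), s i))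
      atTop (nhds 0) ∧
    ∀ (F : Finset ℤ) (ε : ℤ → ℂ), (∃ M : ℝ, ∀ i, ‖ε i‖ ≤ M) →
      N₀ (gpSum Θ 0 ε s F) ≤ C * (⨆ i : ℤ, (‖ε i‖₊ : ℝ≥0∞)) ∧
      N₁ (gpSum Θ 1 ε s F) ≤ C * (⨆ i : ℤ, (‖ε i‖₊ : ℝ≥0∞))

/-- The Gustavsson–Peetre quasi-norm: the infimum of admissible constants. -/
noncomputable def gpNorm (N₀ N₁ : E → ℝ≥0∞) (Θ : ℝ) (a : E) : ℝ≥0∞ :=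
  sInf {C : ℝ≥0∞ | MemGP N₀ N₁ Θ C a}

end GustavssonPeetre

section GustavssonPeetreMap

variable {E F : Type*} [AddCommGroup E] [Module ℂ E] [AddCommGroup F] [Module ℂ F]
  {N₀ N₁ : E → ℝ≥0∞} {M₀ M₁ : F → ℝ≥0∞} {T : E →ₗ[ℂ] F} {K : ℝ≥0∞}

theorem sumQuasiNorm_map_le (hK : K ≠ ⊤) (hT₀ : ∀ x, M₀ (T x) ≤ K * N₀ x)
    (hT₁ : ∀ x, M₁ (T x) ≤ K * N₁ x) (z : E) :
    sumQuasiNorm M₀ M₁ (T z) ≤ K * sumQuasiNorm N₀ N₁ z := by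
  rw [sumQuasiNorm, sumQuasiNorm, ENNReal.mul_iInf fun h => absurd h hK]
  refine le_iInf fun y => iInf_le_of_le (T y) ?_
  calc M₀ (T y) + M₁ (T z - T y) ≤ K * N₀ y + K * N₁ (z - y) := by
        rw [← map_sub]
        exact add_le_add (hT₀ y) (hT₁ (z - y))
    _ = K * (N₀ y + N₁ (z - y)) := (mul_add _ _ _).symm

theorem map_gpSum (Θ : ℝ) (j : ℕ) (ε : ℤ → ℂ) (s : ℤ → E) (S : Finset ℤ) :
    T (gpSum Θ j ε s S) = gpSum Θ j ε (T ∘ s) S := by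
  simp only [gpSum, map_sum, map_smul, Function.comp_apply]

theorem MemGP.map {Θ : ℝ} {C : ℝ≥0∞} {a : E} (hK : K ≠ ⊤)
    (hT₀ : ∀ x, M₀ (T x) ≤ K * N₀ x) (hT₁ : ∀ x, M₁ (T x) ≤ K * N₁ x)
    (ha : MemGP N₀ N₁ Θ C a) : MemGP M₀ M₁ Θ (K * C) (T a) := by
  obtain ⟨s, hs_fin, hs_tendsto, hs_bound⟩ := ha
  refine ⟨T ∘ s, fun i => ⟨?_, ?_⟩, ?_, fun S ε hε => ⟨?_, ?_⟩⟩
  · exact (hT₀ _).trans_lt (ENNReal.mul_lt_top hK.lt_top (hs_fin i).1)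
  · exact (hT₁ _).trans_lt (ENNReal.mul_lt_top hK.lt_top (hs_fin i).2)
  · have hlim := ENNReal.Tendsto.const_mul hs_tendsto (Or.inr hK)
    rw [mul_zero] at hlim
    refine tendsto_of_tendsto_of_tendsto_of_le_of_le tendsto_const_nhds hlim
      (fun _ => zero_le) fun k => ?_
    have := sumQuasiNorm_map_le hK hT₀ hT₁ (a - ∑ i ∈ Finset.Icc (-(k : ℤ)) k, s i)
    rwa [map_sub, map_sum] at this
  · rw [← map_gpSum, mul_assoc]
    exact (hT₀ _).trans (mul_le_mul_right (hs_bound S ε hε).1 _)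
  · rw [← map_gpSum, mul_assoc]
    exact (hT₁ _).trans (mul_le_mul_right (hs_bound S ε hε).2 _)

theorem memGP_zero_of_sumQuasiNorm_eq_zero {Θ : ℝ} {a : E} (h₀ : N₀ 0 = 0) (h₁ : N₁ 0 = 0)
    (ha : sumQuasiNorm N₀ N₁ a = 0) : MemGP N₀ N₁ Θ 0 a := by
  refine ⟨0, fun _ => by simp [h₀, h₁], ?_, fun S ε _ => ?_⟩
  · simp only [Pi.zero_apply, Finset.sum_const_zero, sub_zero, ha]
    exact tendsto_const_nhds
  · simp [gpSum, h₀, h₁]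

theorem gpNorm_map_le (Θ : ℝ) (hK : K ≠ ⊤) (hT₀ : ∀ x, M₀ (T x) ≤ K * N₀ x)
    (hT₁ : ∀ x, M₁ (T x) ≤ K * N₁ x) (a : E) :
    gpNorm M₀ M₁ Θ (T a) ≤ K * gpNorm N₀ N₁ Θ a := by
  rcases eq_or_ne K 0 with rfl | hK₀
  · have hM₀ : M₀ 0 = 0 :=
      nonpos_iff_eq_zero.1 (by simpa only [map_zero, zero_mul] using hT₀ 0)
    have hM₁ : M₁ 0 = 0 :=
      nonpos_iff_eq_zero.1 (by simpa only [map_zero, zero_mul] using hT₁ 0)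
    have hTa : sumQuasiNorm M₀ M₁ (T a) = 0 :=
      nonpos_iff_eq_zero.1 <| by
        simpa only [zero_mul] using sumQuasiNorm_map_le ENNReal.zero_ne_top hT₀ hT₁ a
    have h0 : MemGP M₀ M₁ Θ 0 (T a) := memGP_zero_of_sumQuasiNorm_eq_zero hM₀ hM₁ hTa
    exact (sInf_le (s := {C | MemGP M₀ M₁ Θ C (T a)}) h0).trans zero_le
  · rw [gpNorm, gpNorm, sInf_eq_iInf, sInf_eq_iInf, ENNReal.mul_iInf_of_ne hK₀ hK]
    refine le_iInf fun C => ?_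
    rw [ENNReal.mul_iInf_of_ne hK₀ hK]
    exact le_iInf fun hC => iInf₂_le (K * C) (hC.map hK hT₀ hT₁)

end GustavssonPeetreMap

theorem gustavsson_peetre_interpolation_general
    {E F : Type*} [AddCommGroup E] [Module ℂ E] [AddCommGroup F] [Module ℂ F]
    (N₀ N₁ : E → ℝ≥0∞) (M₀ M₁ : F → ℝ≥0∞) (Θ : ℝ)
    (T : E →ₗ[ℂ] F) (K₀ K₁ : ℝ≥0∞) (hK₀ : K₀ < ⊤) (hK₁ : K₁ < ⊤)
    (hT₀ : ∀ x : E, M₀ (T x) ≤ K₀ * N₀ x)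
    (hT₁ : ∀ x : E, M₁ (T x) ≤ K₁ * N₁ x) :
    ∀ a : E,
      (∀ C : ℝ≥0∞, MemGP N₀ N₁ Θ C a → MemGP M₀ M₁ Θ (max K₀ K₁ * C) (T a)) ∧
      gpNorm M₀ M₁ Θ (T a) ≤ max K₀ K₁ * gpNorm N₀ N₁ Θ a := by
  have hK : max K₀ K₁ ≠ ⊤ := (max_lt hK₀ hK₁).ne
  have hT₀' : ∀ x, M₀ (T x) ≤ max K₀ K₁ * N₀ x :=
    fun x => (hT₀ x).trans (mul_le_mul_left (le_max_left _ _) _)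
  have hT₁' : ∀ x, M₁ (T x) ≤ max K₀ K₁ * N₁ x :=
    fun x => (hT₁ x).trans (mul_le_mul_left (le_max_right _ _) _)
  exact fun a => ⟨fun _ ha => ha.map hK hT₀' hT₁', gpNorm_map_le Θ hK hT₀' hT₁' a⟩

/-- interpolation property of the `±`-method of Gustavsson and
Peetre: a linear operator `T`, bounded from `A_j` to `B_j` with bound `K_j`
(`j = 0,1`) for quasi-Banach couples `(A₀,A₁)` and `(B₀,B₁)`, maps
`⟨A₀, A₁, Θ⟩` continuously into `⟨B₀, B₁, Θ⟩` with operator quasi-norm at most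
`max{K₀, K₁}`. -/
theorem gustavsson_peetre_interpolation
    {E F : Type*} [AddCommGroup E] [Module ℂ E] [AddCommGroup F] [Module ℂ F]
    (N₀ N₁ : E → ℝ≥0∞) (M₀ M₁ : F → ℝ≥0∞) (Θ : ℝ) (hΘ : Θ ∈ Set.Ioo (0 : ℝ) 1)
    -- the four quasi-norms are homogeneous and satisfy a quasi-triangle inequality
    (hN₀h : ∀ (c : ℂ) (x : E), N₀ (c • x) = (‖c‖₊ : ℝ≥0∞) * N₀ x)
    (hN₁h : ∀ (c : ℂ) (x : E), N₁ (c • x) = (‖c‖₊ : ℝ≥0∞) * N₁ x)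
    (hM₀h : ∀ (c : ℂ) (y : F), M₀ (c • y) = (‖c‖₊ : ℝ≥0∞) * M₀ y)
    (hM₁h : ∀ (c : ℂ) (y : F), M₁ (c • y) = (‖c‖₊ : ℝ≥0∞) * M₁ y)
    (hN₀t : ∃ K : ℝ≥0∞, 1 ≤ K ∧ ∀ x y : E, N₀ (x + y) ≤ K * (N₀ x + N₀ y))
    (hN₁t : ∃ K : ℝ≥0∞, 1 ≤ K ∧ ∀ x y : E, N₁ (x + y) ≤ K * (N₁ x + N₁ y))
    (hM₀t : ∃ K : ℝ≥0∞, 1 ≤ K ∧ ∀ x y : F, M₀ (x + y) ≤ K * (M₀ x + M₀ y))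
    (hM₁t : ∃ K : ℝ≥0∞, 1 ≤ K ∧ ∀ x y : F, M₁ (x + y) ≤ K * (M₁ x + M₁ y))
    (T : E →ₗ[ℂ] F) (K₀ K₁ : ℝ≥0∞) (hK₀ : K₀ < ⊤) (hK₁ : K₁ < ⊤)
    (hT₀ : ∀ x : E, M₀ (T x) ≤ K₀ * N₀ x)
    (hT₁ : ∀ x : E, M₁ (T x) ≤ K₁ * N₁ x) :
    ∀ a : E,
      (∀ C : ℝ≥0∞, MemGP N₀ N₁ Θ C a → MemGP M₀ M₁ Θ (max K₀ K₁ * C) (T a)) ∧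
      gpNorm M₀ M₁ Θ (T a) ≤ max K₀ K₁ * gpNorm N₀ N₁ Θ a :=
  gustavsson_peetre_interpolation_general N₀ N₁ M₀ M₁ Θ T K₀ K₁ hK₀ hK₁ hT₀ hT₁
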